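/- (Theorem 2, minimum invariance, attainment.) Suppose that for each 0 ≤ k < N there exists a Borel-measurable map μ_k^* : X → U such that 1_A(x) ∫_X W_{k+1}^min(y) T(dy|x,μ_k^*(x)) = W_k^min(x) for all x ∈ X (i.e. the infimum in the DP recursion is attained by a measurable selector). Then the Markov policy π^* = (μ_0^*,…,μ_{N−1}^*) satisfies V_k^{π^*}(x) = W_k^min(x) for all 0 ≤ k ≤ N and x ∈ X, where V_k^{π^*}(x) = P_{k,x}^{π^*}( x_j ∈ A for all k ≤ j ≤ N ); in particular W_k^min(x) = min_{π} P_{k,x}^π( x_j ∈ A for all k ≤ j ≤ N ), the minimum being over all Markov policies. -/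

import Mathlib

/-!
Under a Markov policy the probability `V_k` of staying in `A` on `[k, N]` satisfies the backward
recursion `V_N = 1_A`, `V_k = 1_A · κ_k V_{k+1}`: the trajectory law started at time `k` never
changes coordinate `k`, so the event `x_k ∈ A` factors out of the first step. By backward induction
every sub-solution of this recursion lies below `V`, and every super-solution above it. Being an
infimum over actions, `W^min` is a sub-solution for every policy, and the selector `μ^*` makes it an
exact solution for `π^*`; hence `V^π ≥ W^min = V^{π^*}`. The comparison is carried out in `ℝ≥0∞`,
which loses nothing because the recursion along `π^*` keeps `W^min` in `[0, 1]`.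
-/

open MeasureTheory ProbabilityTheory Set

noncomputable section

namespace StochasticSafety

variable {X U : Type*} [MeasurableSpace X] [MeasurableSpace U]

/-- A Markov policy: a sequence of (Borel-)measurable maps from states to actions. -/
structure Policy (X U : Type*) [MeasurableSpace X] [MeasurableSpace U] where
  act : ℕ → X → U
  measurable_act : ∀ k, Measurable (act k)

/-- The closed-loop kernel `κ_k^π(·|x) = T(·|x, μ_k(x))` of a policy at time `k`. -/
def Policy.kernel (T : Kernel (X × U) X) (π : Policy X U) (k : ℕ) : Kernel X X :=
  T.comap (fun x => (x, π.act k x)) (measurable_id.prodMk (π.measurable_act k))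

/-- One step of the closed-loop trajectory evolution at time `j`: given the trajectory
built so far, sample `y` from `κ` applied at coordinate `j` and record it at
coordinate `j + 1`. -/
def step (κ : Kernel X X) (j : ℕ) : Kernel (ℕ → X) (ℕ → X) :=
  Kernel.map (Kernel.id ×ₖ κ.comap (fun ω => ω j) (measurable_pi_apply j))
    (fun p => Function.update p.1 (j + 1) p.2)

/-- Kernel describing `m` steps of the trajectory evolution, starting at time `k`,
under the time-dependent kernels `κ`. -/
def evolve (κ : ℕ → Kernel X X) : ℕ → ℕ → Kernel (ℕ → X) (ℕ → X)
  | _, 0 => Kernel.id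
  | k, (m + 1) => (evolve κ (k + 1) m) ∘ₖ step (κ k) k

/-- The law `P_{k,x}^π` of the closed-loop trajectory `(x_k, …, x_N)` started at `x`
at time `k` under policy `π` (finite Ionescu–Tulcea composition of the closed-loop
kernels): the states `x_k, …, x_N` are recorded in coordinates `k, …, N` of `ℕ → X`,
all other coordinates carry the irrelevant initial value `x`. -/
def trajLaw (T : Kernel (X × U) X) (π : Policy X U) (N k : ℕ) (x : X) :
    Measure (ℕ → X) :=
  evolve (π.kernel T) k (N - k) (fun _ => x)

/-- The event that the trajectory stays in `A` at all times `j` with `k ≤ j ≤ N`. -/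
def safeEvent (A : Set X) (k N : ℕ) : Set (ℕ → X) :=
  {ω | ∀ j, k ≤ j → j ≤ N → ω j ∈ A}

/-- The event that the trajectory visits `A` at some time `j` with `k ≤ j ≤ N`. -/
def reachEvent (A : Set X) (k N : ℕ) : Set (ℕ → X) :=
  {ω | ∃ j, k ≤ j ∧ j ≤ N ∧ ω j ∈ A}

open scoped ENNReal

instance Policy.isMarkovKernel_kernel (T : Kernel (X × U) X) [IsMarkovKernel T]
    (π : Policy X U) (k : ℕ) : IsMarkovKernel (π.kernel T k) := by
  unfold Policy.kernel; infer_instance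

lemma Policy.kernel_apply (T : Kernel (X × U) X) (π : Policy X U) (k : ℕ) (x : X) :
    π.kernel T k x = T (x, π.act k x) :=
  rfl

lemma measurableSet_safeEvent {A : Set X} (hA : MeasurableSet A) (k N : ℕ) :
    MeasurableSet (safeEvent A k N) := by
  simp only [safeEvent, ofPred_forall]
  exact .iInter fun j => .iInter fun _ => .iInter fun _ => measurable_pi_apply j hA

lemma safeEvent_self {α : Type*} (A : Set α) (k : ℕ) :
    safeEvent A k k = (fun ω : ℕ → α => ω k) ⁻¹' A := by
  ext ω
  refine ⟨fun h => h k le_rfl le_rfl, fun h j hkj hjk => ?_⟩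
  rwa [le_antisymm hjk hkj]

lemma safeEvent_eq_inter {α : Type*} {k N : ℕ} (A : Set α) (hkN : k ≤ N) :
    safeEvent A k N = safeEvent A (k + 1) N ∩ (fun ω : ℕ → α => ω k) ⁻¹' A := by
  ext ω
  refine ⟨fun h => ⟨fun j hj hjN => h j (by omega) hjN, h k le_rfl hkN⟩, ?_⟩
  rintro ⟨h, hk⟩ j hkj hjN
  rcases hkj.eq_or_lt with rfl | hlt
  exacts [hk, h j hlt hjN]

lemma measure_inter_preimage_of_ae_eq {Ω α : Type*} [MeasurableSpace Ω] {μ : Measure Ω}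
    {f : Ω → α} {a : α} (hf : ∀ᵐ ω ∂μ, f ω = a) (A : Set α) (S : Set Ω) :
    μ (S ∩ f ⁻¹' A) = A.indicator 1 a * μ S := by
  by_cases ha : a ∈ A
  · rw [indicator_of_mem ha, Pi.one_apply, one_mul]
    exact measure_inter_conull (mem_ae_iff.1 (hf.mono fun ω h => by simpa [h]))
  · rw [indicator_of_notMem ha, zero_mul]
    exact measure_inter_null_of_null_right S
      (measure_eq_zero_iff_ae_notMem.2 (hf.mono fun ω h => by simpa [h]))

lemma step_apply (κ : Kernel X X) [IsMarkovKernel κ] (j : ℕ) (ω : ℕ → X) :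
    step κ j ω = (κ (ω j)).map (Function.update ω (j + 1)) := by
  rw [step, Kernel.map_apply _ measurable_update', Kernel.prod_apply, Kernel.id_apply,
    Kernel.comap_apply, Measure.dirac_prod,
    Measure.map_map measurable_update' measurable_prodMk_left]
  rfl

section evolve

variable {κ : ℕ → Kernel X X} {A : Set X}

lemma evolve_zero_apply_safeEvent (hA : MeasurableSet A) (k : ℕ) (ω : ℕ → X) :
    evolve κ k 0 ω (safeEvent A k k) = A.indicator 1 (ω k) := by
  rw [evolve, Kernel.id_apply, safeEvent_self,
    Measure.dirac_apply' _ (measurable_pi_apply k hA)]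
  rfl

variable [∀ k, IsMarkovKernel (κ k)]

instance isMarkovKernel_evolve (k m : ℕ) : IsMarkovKernel (evolve κ k m) := by
  induction m generalizing k with
  | zero => exact inferInstanceAs (IsMarkovKernel Kernel.id)
  | succ m ih =>
    have : IsMarkovKernel (step (κ k) k) := Kernel.IsMarkovKernel.map _ measurable_update'
    exact inferInstanceAs (IsMarkovKernel (evolve κ (k + 1) m ∘ₖ step (κ k) k))

lemma evolve_succ_apply (k m : ℕ) (ω : ℕ → X) {S : Set (ℕ → X)} (hS : MeasurableSet S) :
    evolve κ k (m + 1) ω S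
      = ∫⁻ y, evolve κ (k + 1) m (Function.update ω (k + 1) y) S ∂κ k (ω k) := by
  rw [evolve, Kernel.comp_apply' _ _ _ hS, step_apply,
    lintegral_map (Kernel.measurable_coe _ hS) (measurable_update ω)]

lemma ae_evolve_apply_eq [MeasurableSingletonClass X] {j k : ℕ} (hjk : j ≤ k) (m : ℕ)
    (ω : ℕ → X) : ∀ᵐ ρ ∂evolve κ k m ω, ρ j = ω j := by
  have hmeas (ω : ℕ → X) : MeasurableSet {ρ : ℕ → X | ρ j = ω j} :=
    (measurableSet_singleton (ω j)).preimage (measurable_pi_apply j)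
  induction m generalizing k ω with
  | zero => exact (ae_dirac_iff (hmeas ω)).2 rfl
  | succ m ih =>
    have hS : MeasurableSet {ρ : ℕ → X | ρ j ≠ ω j} := (hmeas ω).compl
    rw [ae_iff, evolve_succ_apply k m ω hS]
    have hnull (y : X) :
        evolve κ (k + 1) m (Function.update ω (k + 1) y) {ρ | ρ j ≠ ω j} = 0 := by
      simpa [Function.update_of_ne (by omega : j ≠ k + 1), ae_iff]
        using ih (hjk.trans k.le_succ) (Function.update ω (k + 1) y)
    simp only [hnull, lintegral_zero]

lemma evolve_succ_apply_safeEvent [MeasurableSingletonClass X] (hA : MeasurableSet A)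
    {k N : ℕ} (hkN : k ≤ N) (m : ℕ) (ω : ℕ → X) :
    evolve κ k (m + 1) ω (safeEvent A k N) = A.indicator 1 (ω k) *
      ∫⁻ y, evolve κ (k + 1) m (Function.update ω (k + 1) y) (safeEvent A (k + 1) N)
        ∂κ k (ω k) := by
  rw [safeEvent_eq_inter A hkN, evolve_succ_apply k m ω
    ((measurableSet_safeEvent hA _ _).inter (measurable_pi_apply k hA))]
  simp_rw [measure_inter_preimage_of_ae_eq (ae_evolve_apply_eq k.le_succ m _),
    Function.update_of_ne (Nat.succ_ne_self k).symm]
  exact lintegral_const_mul' _ _ (by by_cases h : ω k ∈ A <;> simp [h])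

variable [MeasurableSingletonClass X] {N : ℕ} (W : ℕ → X → ℝ≥0∞)

lemma le_evolve_safeEvent (hA : MeasurableSet A) (hN : ∀ x, W N x ≤ A.indicator 1 x)
    (hstep : ∀ k < N, ∀ x, W k x ≤ A.indicator 1 x * ∫⁻ y, W (k + 1) y ∂κ k x)
    {k : ℕ} (hk : k ≤ N) (ω : ℕ → X) :
    W k (ω k) ≤ evolve κ k (N - k) ω (safeEvent A k N) := by
  induction hk using Nat.decreasingInduction generalizing ω with
  | self => simpa [evolve_zero_apply_safeEvent hA] using hN (ω N)
  | of_succ k hkN ih =>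
    rw [show N - k = N - (k + 1) + 1 by omega, evolve_succ_apply_safeEvent hA hkN.le]
    calc W k (ω k) ≤ A.indicator 1 (ω k) * ∫⁻ y, W (k + 1) y ∂κ k (ω k) := hstep k hkN _
      _ ≤ _ := by
        gcongr with y
        simpa using ih (Function.update ω (k + 1) y)

lemma evolve_safeEvent_le (hA : MeasurableSet A) (hN : ∀ x, A.indicator 1 x ≤ W N x)
    (hstep : ∀ k < N, ∀ x, A.indicator 1 x * ∫⁻ y, W (k + 1) y ∂κ k x ≤ W k x)
    {k : ℕ} (hk : k ≤ N) (ω : ℕ → X) :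
    evolve κ k (N - k) ω (safeEvent A k N) ≤ W k (ω k) := by
  induction hk using Nat.decreasingInduction generalizing ω with
  | self => simpa [evolve_zero_apply_safeEvent hA] using hN (ω N)
  | of_succ k hkN ih =>
    rw [show N - k = N - (k + 1) + 1 by omega, evolve_succ_apply_safeEvent hA hkN.le]
    calc _ ≤ A.indicator 1 (ω k) * ∫⁻ y, W (k + 1) y ∂κ k (ω k) := by
          gcongr with y
          simpa using ih (Function.update ω (k + 1) y)
      _ ≤ W k (ω k) := hstep k hkN _

end evolve

instance isProbabilityMeasure_trajLaw (T : Kernel (X × U) X) [IsMarkovKernel T]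
    (π : Policy X U) (N k : ℕ) (x : X) : IsProbabilityMeasure (trajLaw T π N k x) := by
  unfold trajLaw; infer_instance

lemma ofReal_indicator_apply {α : Type*} (A : Set α) (F : α → ℝ) (x : α) :
    ENNReal.ofReal (A.indicator F x) = A.indicator 1 x * ENNReal.ofReal (F x) := by
  by_cases hx : x ∈ A <;> simp [hx]

lemma ofReal_integral_eq_lintegral_of_mem_Icc {α : Type*} [MeasurableSpace α] {μ : Measure α}
    [IsFiniteMeasure μ] {f : α → ℝ} (hf : Measurable f) (h01 : ∀ y, f y ∈ Icc 0 1) :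
    ENNReal.ofReal (∫ y, f y ∂μ) = ∫⁻ y, ENNReal.ofReal (f y) ∂μ :=
  ofReal_integral_eq_lintegral_ofReal
    (.of_bound hf.aestronglyMeasurable 1 (ae_of_all _ fun y =>
      abs_le.2 ⟨by linarith [(h01 y).1], (h01 y).2⟩))
    (ae_of_all _ fun y => (h01 y).1)

lemma mem_Icc_of_bellman {κ : ℕ → Kernel X X} [∀ k, IsMarkovKernel (κ k)] {A : Set X}
    {N : ℕ} {W : ℕ → X → ℝ} (hWN : ∀ x, W N x = A.indicator 1 x)
    (hW : ∀ k < N, ∀ x, A.indicator (fun x' => ∫ y, W (k + 1) y ∂κ k x') x = W k x)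
    {k : ℕ} (hk : k ≤ N) (x : X) : W k x ∈ Icc 0 1 := by
  induction hk using Nat.decreasingInduction generalizing x with
  | self => by_cases hx : x ∈ A <;> simp [hWN, hx]
  | of_succ k hkN ih =>
    rw [← hW k hkN]
    by_cases hx : x ∈ A
    · simp only [indicator_of_mem hx]
      refine ⟨integral_nonneg fun y => (ih y).1, ?_⟩
      calc ∫ y, W (k + 1) y ∂κ k x ≤ ∫ _, (1 : ℝ) ∂κ k x :=
            integral_mono_of_nonneg (ae_of_all _ fun y => (ih y).1) (integrable_const 1)
              (ae_of_all _ fun y => (ih y).2)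
        _ = 1 := by simp
    · simp [hx]

variable [StandardBorelSpace X] [TopologicalSpace U]
  [TopologicalSpace.MetrizableSpace U] [CompactSpace U] [Nonempty U] [BorelSpace U]

/-- Theorem 2, minimum invariance, attainment: if at each time `k < N`
a measurable selector `μ_k^*` attains the infimum in the DP recursion, then the
Markov policy `π^* = (μ_0^*, …, μ_{N-1}^*)` satisfies `V_k^{π^*} = W_k^min`
everywhere; in particular `W_k^min(x)` is the minimum over all Markov policies of the
probability of staying in `A` over `[k, N]`. -/
theorem min_dp_value_attained
    (T : Kernel (X × U) X) [IsMarkovKernel T]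
    (N : ℕ) (A : Set X) (hA : MeasurableSet A)
    (Wmin : ℕ → X → ℝ) (hWmeas : ∀ k, Measurable (Wmin k))
    (hWN : ∀ x, Wmin N x = A.indicator 1 x)
    (hW : ∀ k < N, ∀ x,
      Wmin k x = ⨅ u : U, A.indicator (fun x' => ∫ y, Wmin (k + 1) y ∂(T (x', u))) x)
    (μstar : ℕ → X → U) (hμstar : ∀ k, Measurable (μstar k))
    (hopt : ∀ k < N, ∀ x,
      A.indicator (fun x' => ∫ y, Wmin (k + 1) y ∂(T (x', μstar k x'))) x = Wmin k x) :
    (∀ k ≤ N, ∀ x,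
        (trajLaw T ⟨μstar, hμstar⟩ N k x (safeEvent A k N)).toReal = Wmin k x) ∧
    (∀ k ≤ N, ∀ x,
        IsLeast
          (Set.range fun π : Policy X U =>
            (trajLaw T π N k x (safeEvent A k N)).toReal)
          (Wmin k x)) := by
  set πstar : Policy X U := ⟨μstar, hμstar⟩
  set V : ℕ → X → ℝ≥0∞ := fun k x => ENNReal.ofReal (Wmin k x)
  have hW01 {k : ℕ} (hk : k ≤ N) (x : X) : Wmin k x ∈ Icc 0 1 :=
    mem_Icc_of_bellman (κ := πstar.kernel T) hWN hopt hk x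
  have hVN (x : X) : V N x = A.indicator 1 x := by simp [V, hWN, ofReal_indicator_apply]
  have hV_step : ∀ k < N, ∀ x (μ : X → U),
      ENNReal.ofReal (A.indicator (fun x' => ∫ y, Wmin (k + 1) y ∂(T (x', μ x'))) x) =
        A.indicator 1 x * ∫⁻ y, V (k + 1) y ∂(T (x, μ x)) := fun k hk x μ => by
    rw [ofReal_indicator_apply, ofReal_integral_eq_lintegral_of_mem_Icc (hWmeas _) (hW01 hk)]
  have hlower (π : Policy X U) {k : ℕ} (hk : k ≤ N) (x : X) :
      V k x ≤ trajLaw T π N k x (safeEvent A k N) := by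
    refine le_evolve_safeEvent (κ := π.kernel T) V hA (fun x => (hVN x).le)
      (fun k hk x => ?_) hk _
    rw [Policy.kernel_apply, ← hV_step k hk x fun _ => π.act k x]
    refine ENNReal.ofReal_le_ofReal ((hW k hk x).trans_le (ciInf_le ⟨0, ?_⟩ (π.act k x)))
    rintro _ ⟨u, rfl⟩
    exact indicator_nonneg (fun _ _ => integral_nonneg fun y => (hW01 hk y).1) x
  have hupper {k : ℕ} (hk : k ≤ N) (x : X) :
      trajLaw T πstar N k x (safeEvent A k N) ≤ V k x :=
    evolve_safeEvent_le (κ := πstar.kernel T) V hA (fun x => (hVN x).ge)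
      (fun k hk x => by rw [Policy.kernel_apply, ← hV_step k hk x (μstar k), hopt k hk x]) hk _
  have hvalue {k : ℕ} (hk : k ≤ N) (x : X) :
      (trajLaw T πstar N k x (safeEvent A k N)).toReal = Wmin k x := by
    rw [le_antisymm (hupper hk x) (hlower πstar hk x), ENNReal.toReal_ofReal (hW01 hk x).1]
  refine ⟨fun k hk x => hvalue hk x, fun k hk x => ⟨⟨πstar, hvalue hk x⟩, ?_⟩⟩
  rintro _ ⟨π, rfl⟩
  exact (ENNReal.ofReal_le_iff_le_toReal (measure_ne_top _ _)).1 (hlower π hk x)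

end StochasticSafety
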